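/- arXiv:1106.6002 — 3 statements merged into one kernel-verified Lean document; each statement's English description precedes it below -/
import Mathlib

section
/- Let ξ_n > 0 and η_n > 0 be sequences with sup_n ξ_n²/n < ∞, and fix σ ∈ (0,∞). Then p_n(θ, σ) → 0 as n → ∞ for every θ ∈ ℝ with θ ≠ 0 if and only if ξ_n η_n → 0 as n → ∞. -/
open MeasureTheory ProbabilityTheory Filter Set

/-- Standard normal cdf. -/
noncomputable def Phi (x : ℝ) : ℝ :=
  ∫ t in Iic x, (Real.sqrt (2 * Real.pi))⁻¹ * Real.exp (-t ^ 2 / 2)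

/-- Standard normal pdf. -/
noncomputable def stdPhi (t : ℝ) : ℝ :=
  (Real.sqrt (2 * Real.pi))⁻¹ * Real.exp (-t ^ 2 / 2)

/-- Extension of `Phi` to the extended reals, with `PhiE ⊤ = 1` and `PhiE ⊥ = 0`. -/
noncomputable def PhiE (z : EReal) : ℝ :=
  if z = ⊤ then 1 else if z = ⊥ then 0 else Phi z.toReal

/-- Density of `m^{-1/2}` times the square root of a chi-square with `m` degrees of freedom. -/
noncomputable def rho (m : ℕ) (s : ℝ) : ℝ :=
  if 0 < s then
    (2 : ℝ) ^ ((1 : ℝ) - (m : ℝ) / 2) * (Real.Gamma ((m : ℝ) / 2))⁻¹ * Real.sqrt m *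
      ((m : ℝ) * s ^ 2) ^ (((m : ℝ) - 1) / 2) * Real.exp (-(m : ℝ) * s ^ 2 / 2)
  else 0

/-- Known-variance variable deletion probability. -/
noncomputable def pdel (n : ℕ) (ξ η θ σ : ℝ) : ℝ :=
  Phi (Real.sqrt n * (-θ / (σ * ξ) + η)) - Phi (Real.sqrt n * (-θ / (σ * ξ) - η))


/-!
`pdel n ξ η θ σ` is the standard Gaussian mass of the interval with centre `m = -√n θ / (σ ξ)`
and half-width `h = √n η`, and `h |θ| = σ ξ η |m|`.

If `ξ η → 0`, eventually `h ≤ |m| / 2`, so every point of the interval has modulus at least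
`|m| / 2` and the mass is at most `2 h φ(m / 2) = (2 σ ξ η / |θ|) |m| φ(m / 2) ≤ 4 σ ξ η / |θ|`.

If `ξ η ≥ ε` infinitely often, take `θ = σ ε / 2`: then `h ≥ 2 |m|`, and `ξ ≤ √C √n` gives
`h - |m| ≥ |m| ≥ ε / (2 √C)`, so the interval contains a fixed `[-r, r]` of positive mass.
-/

open Real

lemma le_sqrt_mul_sqrt_of_sq_div_le {x y C : ℝ} (hy : 0 < y) (h : x ^ 2 / y ≤ C) :
    x ≤ √C * √y := by
  rw [← sqrt_mul' _ hy.le]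
  exact (le_abs_self x).trans (abs_le_sqrt ((div_le_iff₀ hy).1 h))

lemma stdPhi_pos (t : ℝ) : 0 < stdPhi t := by
  unfold stdPhi
  positivity

lemma integrable_stdPhi : Integrable stdPhi := by
  refine ((integrable_exp_neg_mul_sq (b := 1 / 2) (by norm_num)).const_mul
    (√(2 * π))⁻¹).congr (ae_of_all _ fun t => ?_)
  simp only [stdPhi]
  ring_nf

lemma stdPhi_le_of_sq_le {d t : ℝ} (h : d ^ 2 ≤ t ^ 2) : stdPhi t ≤ stdPhi d := by
  unfold stdPhi
  gcongr

lemma abs_mul_stdPhi_half_le (x : ℝ) : |x| * stdPhi (x / 2) ≤ 2 := by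
  have hx : |x| ≤ 2 * exp (x ^ 2 / 8) := by
    nlinarith [add_one_le_exp (x ^ 2 / 8), sq_nonneg (|x| - 2), sq_abs x]
  have hc : (√(2 * π))⁻¹ ≤ 1 :=
    inv_le_one_of_one_le₀ (one_le_sqrt.2 (by nlinarith [pi_gt_three]))
  calc |x| * stdPhi (x / 2) = (√(2 * π))⁻¹ * (|x| / exp (x ^ 2 / 8)) := by
        rw [stdPhi, show -(x / 2) ^ 2 / 2 = -(x ^ 2 / 8) by ring, exp_neg]
        ring
    _ ≤ 1 * 2 := by
        gcongr
        exact (div_le_iff₀ (exp_pos _)).2 hx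
    _ = 2 := one_mul 2

lemma Phi_sub_Phi_eq_integral {a b : ℝ} (hab : a ≤ b) :
    Phi b - Phi a = ∫ t in Ioc a b, stdPhi t := by
  rw [Phi, Phi, ← intervalIntegral.integral_of_le hab]
  exact intervalIntegral.integral_Iic_sub_Iic integrable_stdPhi.integrableOn
    integrable_stdPhi.integrableOn

lemma Phi_mono : Monotone Phi := fun a b hab => by
  rw [← sub_nonneg, Phi_sub_Phi_eq_integral hab]
  exact setIntegral_nonneg measurableSet_Ioc fun t _ => (stdPhi_pos t).le

lemma Phi_sub_Phi_neg_pos {r : ℝ} (hr : 0 < r) : 0 < Phi r - Phi (-r) := by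
  rw [Phi_sub_Phi_eq_integral (by linarith), setIntegral_pos_iff_support_of_nonneg_ae
    (ae_of_all _ fun t => (stdPhi_pos t).le) integrable_stdPhi.integrableOn,
    Function.support_eq_univ fun t => (stdPhi_pos t).ne', univ_inter, Real.volume_Ioc]
  exact ENNReal.ofReal_pos.2 (by linarith)

lemma Phi_sub_Phi_le_mul {a b d : ℝ} (hab : a ≤ b)
    (hd : ∀ t ∈ Ioc a b, stdPhi t ≤ stdPhi d) : Phi b - Phi a ≤ (b - a) * stdPhi d := by
  rw [Phi_sub_Phi_eq_integral hab]
  calc ∫ t in Ioc a b, stdPhi t ≤ ∫ _ in Ioc a b, stdPhi d :=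
        setIntegral_mono_on integrable_stdPhi.integrableOn
          (integrableOn_const (by simp)) measurableSet_Ioc hd
    _ = (b - a) * stdPhi d := by
        rw [setIntegral_const, measureReal_def, Real.volume_Ioc,
          ENNReal.toReal_ofReal (by linarith), smul_eq_mul]

lemma Phi_sub_Phi_neg_le_of_abs_add_le {m h r : ℝ} (H : |m| + r ≤ h) :
    Phi r - Phi (-r) ≤ Phi (m + h) - Phi (m - h) := by
  have h₁ : Phi r ≤ Phi (m + h) := Phi_mono (by linarith [neg_abs_le m])
  have h₂ : Phi (m - h) ≤ Phi (-r) := Phi_mono (by linarith [le_abs_self m])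
  linarith

lemma Phi_add_sub_Phi_sub_le {m h : ℝ} (hh : 0 ≤ h) (H : 2 * h ≤ |m|) :
    Phi (m + h) - Phi (m - h) ≤ 2 * h * stdPhi (m / 2) := by
  have hd : ∀ t ∈ Ioc (m - h) (m + h), stdPhi t ≤ stdPhi (m / 2) := fun t ht => by
    have htm : |t - m| ≤ h := abs_le.2 ⟨by linarith [ht.1], by linarith [ht.2]⟩
    have hmt : |m| - |t| ≤ |t - m| := by simpa [abs_sub_comm] using abs_sub_abs_le_abs_sub m t
    refine stdPhi_le_of_sq_le (sq_le_sq.2 ?_)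
    rw [abs_div, abs_two]
    linarith
  simpa [two_mul, add_sub_sub_cancel] using Phi_sub_Phi_le_mul (by linarith) hd

lemma pdel_eq (n : ℕ) (ξ η θ σ : ℝ) :
    pdel n ξ η θ σ = Phi (√n * (-θ / (σ * ξ)) + √n * η) - Phi (√n * (-θ / (σ * ξ)) - √n * η) := by
  rw [pdel, mul_add, mul_sub]

lemma pdel_nonneg (n : ℕ) (ξ θ σ : ℝ) {η : ℝ} (hη : 0 ≤ η) : 0 ≤ pdel n ξ η θ σ := by
  rw [pdel_eq, sub_nonneg]
  exact Phi_mono (by linarith [mul_nonneg (sqrt_nonneg n) hη])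

lemma pdel_le_mul {n : ℕ} {ξ η θ σ : ℝ} (hσ : 0 < σ) (hξ : 0 < ξ) (hη : 0 ≤ η) (hθ : θ ≠ 0)
    (hsmall : 2 * σ * (ξ * η) ≤ |θ|) : pdel n ξ η θ σ ≤ 4 * σ / |θ| * (ξ * η) := by
  set m := √n * (-θ / (σ * ξ))
  have hθ' : 0 < |θ| := abs_pos.2 hθ
  have hm : |m| = √n * |θ| / (σ * ξ) := by
    rw [abs_mul, abs_div, abs_neg, abs_of_nonneg (sqrt_nonneg _), abs_of_pos (mul_pos hσ hξ)]
    ring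
  have hwidth : √n * η * |θ| = σ * ξ * η * |m| := by
    rw [hm]
    field_simp
  have hh : 2 * (√n * η) ≤ |m| := by
    rw [hm, le_div_iff₀ (by positivity)]
    nlinarith [sqrt_nonneg n]
  calc pdel n ξ η θ σ ≤ 2 * (√n * η) * stdPhi (m / 2) := by
        rw [pdel_eq]
        exact Phi_add_sub_Phi_sub_le (by positivity) hh
    _ = 2 * σ * (ξ * η) / |θ| * (|m| * stdPhi (m / 2)) := by
        field_simp
        linear_combination stdPhi (m / 2) * hwidth
    _ ≤ 2 * σ * (ξ * η) / |θ| * 2 := by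
        gcongr
        exact abs_mul_stdPhi_half_le m
    _ = 4 * σ / |θ| * (ξ * η) := by ring

lemma Phi_sub_Phi_neg_le_pdel {n : ℕ} {ξ η σ ε K : ℝ} (hσ : 0 < σ) (hξ : 0 < ξ) (hK : 0 < K)
    (hξK : ξ ≤ K * √n) (hε : 0 ≤ ε) (hεξη : ε ≤ ξ * η) :
    Phi (ε / (2 * K)) - Phi (-(ε / (2 * K))) ≤ pdel n ξ η (σ * ε / 2) σ := by
  rw [pdel_eq]
  refine Phi_sub_Phi_neg_le_of_abs_add_le ?_
  have hm : |√n * (-(σ * ε / 2) / (σ * ξ))| = √n * ε / (2 * ξ) := by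
    rw [abs_mul, abs_div, abs_neg, abs_of_nonneg (sqrt_nonneg _), abs_of_pos (mul_pos hσ hξ),
      abs_of_nonneg (by positivity : 0 ≤ σ * ε / 2)]
    field_simp
  have hr : ε / (2 * K) ≤ √n * ε / (2 * ξ) := by
    rw [div_le_div_iff₀ (by positivity) (by positivity)]
    nlinarith [mul_le_mul_of_nonneg_left hξK hε]
  have hmh : √n * ε / (2 * ξ) * 2 ≤ √n * η := by
    rw [div_mul_eq_mul_div, div_le_iff₀ (by positivity)]
    nlinarith [mul_le_mul_of_nonneg_left hεξη (sqrt_nonneg n)]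
  rw [hm]
  linarith

/-- with `sup_n ξ_n²/n < ∞` and fixed `σ ∈ (0,∞)`, the deletion probability
`p_n(θ,σ)` tends to `0` for every fixed `θ ≠ 0` iff `ξ_n η_n → 0`. -/
theorem stmt_0 (ξ η : ℕ → ℝ) (hξ : ∀ n, 0 < ξ n) (hη : ∀ n, 0 < η n)
    (hsup : ∃ C : ℝ, ∀ n : ℕ, ξ n ^ 2 / n ≤ C)
    (σ : ℝ) (hσ : 0 < σ) :
    (∀ θ : ℝ, θ ≠ 0 →
        Tendsto (fun n => pdel n (ξ n) (η n) θ σ) atTop (nhds 0)) ↔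
      Tendsto (fun n => ξ n * η n) atTop (nhds 0) := by
  obtain ⟨C, hC⟩ := hsup
  have hC₀ : 0 < C := lt_of_lt_of_le (by simpa using pow_pos (hξ 1) 2) (hC 1)
  constructor
  · intro H
    refine tendsto_order.2
      ⟨fun a ha => Eventually.of_forall fun n => ha.trans (mul_pos (hξ n) (hη n)), fun ε hε => ?_⟩
    have hr : 0 < Phi (ε / (2 * √C)) - Phi (-(ε / (2 * √C))) := Phi_sub_Phi_neg_pos (by positivity)
    by_contra hfreq
    obtain ⟨n, hεn, hn, hpdel⟩ := ((not_eventually.1 hfreq).and_eventually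
      ((eventually_gt_atTop 0).and ((H (σ * ε / 2) (by positivity)).eventually_lt_const hr))).exists
    have hξn : ξ n ≤ √C * √n := le_sqrt_mul_sqrt_of_sq_div_le (Nat.cast_pos.2 hn) (hC n)
    exact (Phi_sub_Phi_neg_le_pdel hσ (hξ n) (sqrt_pos.2 hC₀) hξn hε.le
      (not_lt.1 hεn)).not_gt hpdel
  · intro hL θ hθ
    have hsmall : ∀ᶠ n in atTop, 2 * σ * (ξ n * η n) ≤ |θ| :=
      (hL.const_mul (2 * σ)).eventually_le_const (by simpa using hθ)
    refine squeeze_zero' (Eventually.of_forall fun n => pdel_nonneg n _ _ _ (hη n).le)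
      (hsmall.mono fun n hn => pdel_le_mul hσ (hξ n) (hη n).le hθ hn) ?_
    simpa using hL.const_mul (4 * σ / |θ|)
end

section
/- Let ξ_n > 0 and η_n > 0 be sequences with ξ_n η_n → 0 and n^{1/2} η_n → e, where 0 ≤ e < ∞, let k_n be integers with 1 ≤ k_n < n, and suppose θ_n ∈ ℝ and σ_n ∈ (0,∞) satisfy n^{1/2} θ_n/(σ_n ξ_n) → ν in the extended real line. Then: (a1) if n − k_n is eventually constant equal to m, then p̃_n(θ_n, σ_n) → ∫_0^∞ (Φ(−ν + s e) − Φ(−ν − s e)) ρ_m(s) ds; (a2) if n − k_n → ∞, then p̃_n(θ_n, σ_n) → Φ(−ν + e) − Φ(−ν − e). -/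
/-!
Write `c_n = √n θ_n / (σ_n ξ_n)` and `b_n = √n η_n`, so that the integrand of `p̃_n` is
`Φ(-c_n + s b_n) - Φ(-c_n - s b_n)`. Since `Φ` extends continuously to the extended reals, it
converges for every `s` to `Φ(-ν + s e) - Φ(-ν - s e)`, and for fixed `m` dominated convergence
gives (a1). As `m → ∞` the density `ρ_m` concentrates at `1`: its second moment is `1` and its
fourth is `(m + 2) / m`, so `∫ |s - 1| ρ_m ≤ √(2 / m)`. The integrand is `2 |b_n|`-Lipschitz in
`s`, hence the integral is within `2 |b_n| √(2 / m)` of the integrand at `s = 1`, giving (a2).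
-/

open MeasureTheory ProbabilityTheory Filter Set

noncomputable def ptdel (n m : ℕ) (ξ η θ σ : ℝ) : ℝ :=
  ∫ s in Ioi (0 : ℝ),
    (Phi (Real.sqrt n * (-θ / (σ * ξ) + s * η)) -
      Phi (Real.sqrt n * (-θ / (σ * ξ) - s * η))) * rho m s

open Topology

lemma stdPhi_eq_gaussianPDFReal : stdPhi = gaussianPDFReal 0 1 := by
  ext t
  simp [stdPhi, gaussianPDFReal]

lemma Phi_eq_setIntegral_stdPhi (x : ℝ) : Phi x = ∫ t in Iic x, stdPhi t := rfl

lemma Phi_eq_cdf : Phi = cdf (gaussianReal 0 1) := by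
  ext x
  rw [cdf_eq_real, measureReal_def, gaussianReal_apply_eq_integral 0 one_ne_zero,
    ENNReal.toReal_ofReal (setIntegral_nonneg measurableSet_Iic
      fun t _ => gaussianPDFReal_nonneg 0 1 t), ← stdPhi_eq_gaussianPDFReal]
  rfl

lemma Phi_nonneg (x : ℝ) : 0 ≤ Phi x := Phi_eq_cdf ▸ cdf_nonneg _ x

lemma Phi_le_one (x : ℝ) : Phi x ≤ 1 := Phi_eq_cdf ▸ cdf_le_one _ x

lemma tendsto_Phi_atBot : Tendsto Phi atBot (𝓝 0) := Phi_eq_cdf ▸ tendsto_cdf_atBot _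

lemma tendsto_Phi_atTop : Tendsto Phi atTop (𝓝 1) := Phi_eq_cdf ▸ tendsto_cdf_atTop _

lemma stdPhi_le_one (t : ℝ) : stdPhi t ≤ 1 := by
  have hπ : 1 ≤ √(2 * Real.pi) := Real.one_le_sqrt.2 (by linarith [Real.pi_gt_three])
  calc stdPhi t ≤ (√(2 * Real.pi))⁻¹ * 1 := by
        unfold stdPhi; gcongr; exact Real.exp_le_one_iff.2 (by nlinarith [sq_nonneg t])
    _ ≤ 1 := by rw [mul_one]; exact inv_le_one_of_one_le₀ hπ

lemma abs_Phi_sub_Phi_le (x y : ℝ) : |Phi x - Phi y| ≤ |x - y| := by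
  have hint : Integrable stdPhi := stdPhi_eq_gaussianPDFReal ▸ integrable_gaussianPDFReal 0 1
  rw [abs_sub_comm, Phi_eq_setIntegral_stdPhi, Phi_eq_setIntegral_stdPhi,
    intervalIntegral.integral_Iic_sub_Iic hint.integrableOn hint.integrableOn, ← Real.norm_eq_abs,
    abs_sub_comm, ← one_mul |y - x|]
  refine intervalIntegral.norm_integral_le_of_norm_le_const fun t _ => ?_
  rw [Real.norm_of_nonneg (stdPhi_eq_gaussianPDFReal ▸ gaussianPDFReal_nonneg 0 1 t)]
  exact stdPhi_le_one t

@[fun_prop]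
lemma continuous_Phi : Continuous Phi :=
  (LipschitzWith.of_dist_le_mul (K := 1) fun x y => by
    simpa [Real.dist_eq] using abs_Phi_sub_Phi_le x y).continuous

lemma PhiE_coe (x : ℝ) : PhiE x = Phi x := by simp [PhiE]

lemma continuous_PhiE : Continuous PhiE := by
  refine continuous_iff_continuousAt.2 fun z => ?_
  induction z with
  | bot =>
    rw [← continuousWithinAt_compl_self, ContinuousWithinAt, show PhiE ⊥ = 0 by simp [PhiE]]
    refine (tendsto_Phi_atBot.comp EReal.tendsto_toReal_atBot).congr' ?_
    filter_upwards [self_mem_nhdsWithin, nhdsWithin_le_nhds (eventually_ne_nhds bot_ne_top)]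
      with z hbot htop
    simp_all [PhiE]
  | top =>
    rw [← continuousWithinAt_compl_self, ContinuousWithinAt, show PhiE ⊤ = 1 by simp [PhiE]]
    refine (tendsto_Phi_atTop.comp EReal.tendsto_toReal_atTop).congr' ?_
    filter_upwards [self_mem_nhdsWithin, nhdsWithin_le_nhds (eventually_ne_nhds top_ne_bot)]
      with z htop hbot
    simp_all [PhiE]
  | coe x =>
    have hfin : ∀ᶠ z in 𝓝 (x : EReal), z ≠ ⊥ ∧ z ≠ ⊤ :=
      (eventually_ne_nhds (EReal.coe_ne_bot x)).and (eventually_ne_nhds (EReal.coe_ne_top x))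
    refine (continuous_Phi.continuousAt.comp
      (EReal.continuousOn_toReal.continuousAt ?_)).congr_of_eventuallyEq ?_
    · exact hfin.mono fun z hz => by simp [hz.1, hz.2]
    · exact hfin.mono fun z hz => by simp [PhiE, hz.1, hz.2]

lemma tendsto_Phi_neg_add {ι : Type*} {l : Filter ι} {c x : ι → ℝ} {ν : EReal} {x₀ : ℝ}
    (hc : Tendsto (fun i => (c i : EReal)) l (𝓝 ν)) (hx : Tendsto x l (𝓝 x₀)) :
    Tendsto (fun i => Phi (-c i + x i)) l (𝓝 (PhiE (-ν + x₀))) := by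
  have hsum : Tendsto (fun i => -(c i : EReal) + x i) l (𝓝 (-ν + x₀)) :=
    (EReal.continuousAt_add (.inr (EReal.coe_ne_bot x₀)) (.inr (EReal.coe_ne_top x₀))).tendsto.comp
      (hc.neg.prodMk_nhds (EReal.tendsto_coe.2 hx))
  refine ((continuous_PhiE.tendsto _).comp hsum).congr fun i => ?_
  rw [Function.comp_apply, ← EReal.coe_neg, ← EReal.coe_add, PhiE_coe]

noncomputable def normalMass (a r : ℝ) : ℝ := Phi (a + r) - Phi (a - r)

lemma abs_normalMass_le_one (a r : ℝ) : |normalMass a r| ≤ 1 := by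
  rw [normalMass, abs_le]
  constructor <;> linarith [Phi_nonneg (a + r), Phi_le_one (a + r), Phi_nonneg (a - r),
    Phi_le_one (a - r)]

lemma continuous_normalMass (a : ℝ) : Continuous (normalMass a) := by
  unfold normalMass; fun_prop

lemma abs_normalMass_sub_normalMass_le (a r r' : ℝ) :
    |normalMass a r - normalMass a r'| ≤ 2 * |r - r'| := by
  calc |normalMass a r - normalMass a r'|
      = |(Phi (a + r) - Phi (a + r')) - (Phi (a - r) - Phi (a - r'))| := by
        unfold normalMass; ring_nf
    _ ≤ |(a + r) - (a + r')| + |(a - r) - (a - r')| :=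
        (abs_sub _ _).trans (add_le_add (abs_Phi_sub_Phi_le _ _) (abs_Phi_sub_Phi_le _ _))
    _ = 2 * |r - r'| := by
        rw [add_sub_add_left_eq_sub, sub_sub_sub_cancel_left, abs_sub_comm r' r]; ring

lemma tendsto_normalMass {ι : Type*} {l : Filter ι} {c r : ι → ℝ} {ν : EReal} {r₀ : ℝ}
    (hc : Tendsto (fun i => (c i : EReal)) l (𝓝 ν)) (hr : Tendsto r l (𝓝 r₀)) :
    Tendsto (fun i => normalMass (-c i) (r i)) l (𝓝 (PhiE (-ν + r₀) - PhiE (-ν - r₀))) := by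
  have hminus := tendsto_Phi_neg_add hc hr.neg
  rw [EReal.coe_neg, ← sub_eq_add_neg] at hminus
  simpa only [normalMass, sub_eq_add_neg] using (tendsto_Phi_neg_add hc hr).sub hminus

lemma rho_zero (s : ℝ) : rho 0 s = 0 := by simp [rho]

lemma rho_nonneg (m : ℕ) (s : ℝ) : 0 ≤ rho m s := by
  have hΓ := Real.Gamma_nonneg_of_nonneg (by positivity : (0 : ℝ) ≤ m / 2)
  unfold rho
  split_ifs <;> positivity

lemma rho_of_pos {m : ℕ} (hm : 0 < m) {s : ℝ} (hs : 0 < s) :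
    rho m s = 2 * ((m : ℝ) / 2) ^ ((m : ℝ) / 2) / Real.Gamma ((m : ℝ) / 2) *
      (s ^ ((m : ℝ) - 1) * Real.exp (-((m : ℝ) / 2) * s ^ 2)) := by
  have hm' : (0 : ℝ) < m := Nat.cast_pos.2 hm
  have hpow : ((m : ℝ) * s ^ 2) ^ (((m : ℝ) - 1) / 2) =
      (m : ℝ) ^ (((m : ℝ) - 1) / 2) * s ^ ((m : ℝ) - 1) := by
    rw [Real.mul_rpow hm'.le (by positivity), ← Real.rpow_natCast s 2, ← Real.rpow_mul hs.le]
    congr 2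
    push_cast
    ring
  have hconst : (2 : ℝ) ^ ((1 : ℝ) - m / 2) * √m * (m : ℝ) ^ (((m : ℝ) - 1) / 2) =
      2 * ((m : ℝ) / 2) ^ ((m : ℝ) / 2) := by
    rw [Real.sqrt_eq_rpow, mul_assoc, ← Real.rpow_add hm', Real.rpow_sub two_pos, Real.rpow_one,
      Real.div_rpow hm'.le zero_le_two]
    ring_nf
  rw [rho, if_pos hs, hpow, ← hconst]
  ring_nf

lemma integrableOn_pow_mul_rho {m : ℕ} (hm : 0 < m) (j : ℕ) :
    IntegrableOn (fun s => s ^ j * rho m s) (Ioi (0 : ℝ)) := by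
  have hq : (-1 : ℝ) < (m : ℝ) - 1 + j := by
    have : (1 : ℝ) ≤ m := Nat.one_le_cast.2 hm
    linarith [j.cast_nonneg (α := ℝ)]
  refine IntegrableOn.congr_fun
    ((integrableOn_rpow_mul_exp_neg_mul_sq (by positivity : (0 : ℝ) < m / 2) hq).const_mul
      (2 * ((m : ℝ) / 2) ^ ((m : ℝ) / 2) / Real.Gamma ((m : ℝ) / 2))) (fun s hs => ?_)
    measurableSet_Ioi
  rw [rho_of_pos hm hs, Real.rpow_add hs, Real.rpow_natCast]
  ring

lemma integrableOn_rho (m : ℕ) : IntegrableOn (rho m) (Ioi (0 : ℝ)) := by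
  rcases Nat.eq_zero_or_pos m with rfl | hm
  · simp [funext rho_zero]
  · simpa using integrableOn_pow_mul_rho hm 0

lemma integral_pow_mul_rho {m : ℕ} (hm : 0 < m) (j : ℕ) :
    ∫ s in Ioi (0 : ℝ), s ^ j * rho m s =
      ((m : ℝ) / 2) ^ (-(j : ℝ) / 2) * Real.Gamma ((m + j) / 2) / Real.Gamma (m / 2) := by
  have hm' : (0 : ℝ) < m / 2 := by positivity
  have hq : (-1 : ℝ) < (m : ℝ) - 1 + j := by
    have : (1 : ℝ) ≤ m := Nat.one_le_cast.2 hm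
    linarith [j.cast_nonneg (α := ℝ)]
  have hΓ : Real.Gamma ((m : ℝ) / 2) ≠ 0 := (Real.Gamma_pos_of_pos hm').ne'
  calc ∫ s in Ioi (0 : ℝ), s ^ j * rho m s
      = 2 * ((m : ℝ) / 2) ^ ((m : ℝ) / 2) / Real.Gamma ((m : ℝ) / 2) *
          ∫ s in Ioi (0 : ℝ), s ^ ((m : ℝ) - 1 + j) * Real.exp (-((m : ℝ) / 2) * s ^ (2 : ℝ)) := by
        rw [← integral_const_mul]
        refine setIntegral_congr_fun measurableSet_Ioi fun s hs => ?_
        rw [rho_of_pos hm hs, Real.rpow_add hs, Real.rpow_natCast, Real.rpow_two]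
        ring
    _ = _ := by
        have hexp : ((m : ℝ) / 2) ^ ((m : ℝ) / 2) * ((m : ℝ) / 2) ^ (-((m : ℝ) + j) / 2) =
            ((m : ℝ) / 2) ^ (-(j : ℝ) / 2) := by
          rw [← Real.rpow_add hm']; ring_nf
        rw [integral_rpow_mul_exp_neg_mul_rpow two_pos hq hm',
          show (m : ℝ) - 1 + j + 1 = m + j by ring, ← hexp]
        field_simp

lemma integral_rho {m : ℕ} (hm : 0 < m) : ∫ s in Ioi (0 : ℝ), rho m s = 1 := by
  have hΓ : Real.Gamma ((m : ℝ) / 2) ≠ 0 := (Real.Gamma_pos_of_pos (by positivity)).ne'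
  simpa [hΓ] using integral_pow_mul_rho hm 0

lemma integrableOn_sq_sub_one_sq_mul_rho {m : ℕ} (hm : 0 < m) :
    IntegrableOn (fun s => (s ^ 2 - 1) ^ 2 * rho m s) (Ioi (0 : ℝ)) := by
  refine IntegrableOn.congr_fun (((integrableOn_pow_mul_rho hm 4).sub
    ((integrableOn_pow_mul_rho hm 2).const_mul 2)).add (integrableOn_rho m)) (fun s _ => ?_)
    measurableSet_Ioi
  simp only [Pi.add_apply, Pi.sub_apply]
  ring

lemma integral_sq_sub_one_sq_mul_rho {m : ℕ} (hm : 0 < m) :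
    ∫ s in Ioi (0 : ℝ), (s ^ 2 - 1) ^ 2 * rho m s = 2 / (m : ℝ) := by
  have hm' : (0 : ℝ) < m / 2 := by positivity
  have hΓ : Real.Gamma ((m : ℝ) / 2) ≠ 0 := (Real.Gamma_pos_of_pos hm').ne'
  have hΓ₂ : Real.Gamma (((m : ℝ) + 2) / 2) = (m / 2) * Real.Gamma (m / 2) := by
    rw [add_div, div_self two_ne_zero, Real.Gamma_add_one hm'.ne']
  have hΓ₄ : Real.Gamma (((m : ℝ) + 4) / 2) = (m / 2 + 1) * (m / 2) * Real.Gamma (m / 2) := by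
    rw [show ((m : ℝ) + 4) / 2 = (m + 2) / 2 + 1 by ring, Real.Gamma_add_one (by positivity), hΓ₂,
      add_div, div_self two_ne_zero]
    ring
  have h₂ : ∫ s in Ioi (0 : ℝ), s ^ 2 * rho m s = 1 := by
    rw [integral_pow_mul_rho hm, Nat.cast_ofNat, hΓ₂, show -(2 : ℝ) / 2 = -1 by norm_num,
      Real.rpow_neg_one]
    field_simp
  have h₄ : ∫ s in Ioi (0 : ℝ), s ^ 4 * rho m s = ((m : ℝ) + 2) / m := by
    rw [integral_pow_mul_rho hm, Nat.cast_ofNat, hΓ₄, show -(4 : ℝ) / 2 = -2 by norm_num,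
      Real.rpow_neg hm'.le, Real.rpow_two]
    field_simp
  have hexpand : ∀ s : ℝ, (s ^ 2 - 1) ^ 2 * rho m s =
      s ^ 4 * rho m s - 2 * (s ^ 2 * rho m s) + rho m s := fun s => by ring
  have h₄₂ : IntegrableOn (fun s => s ^ 4 * rho m s - 2 * (s ^ 2 * rho m s)) (Ioi (0 : ℝ)) :=
    (integrableOn_pow_mul_rho hm 4).sub ((integrableOn_pow_mul_rho hm 2).const_mul 2)
  simp_rw [hexpand]
  rw [integral_add h₄₂ (integrableOn_rho m),
    integral_sub (integrableOn_pow_mul_rho hm 4) ((integrableOn_pow_mul_rho hm 2).const_mul 2),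
    integral_const_mul, h₂, h₄, integral_rho hm]
  field_simp
  ring

lemma integrableOn_abs_sub_one_mul_rho {m : ℕ} (hm : 0 < m) :
    IntegrableOn (fun s => |s - 1| * rho m s) (Ioi (0 : ℝ)) := by
  refine Integrable.mono' ((integrableOn_pow_mul_rho hm 1).add (integrableOn_rho m))
    ((continuous_id.sub continuous_const).abs.aestronglyMeasurable.mul
      (integrableOn_rho m).aestronglyMeasurable) ?_
  filter_upwards [ae_restrict_mem measurableSet_Ioi] with s (hs : 0 < s)
  rw [norm_mul, norm_abs_eq_norm, Real.norm_of_nonneg (rho_nonneg m s), Pi.add_apply, pow_one,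
    ← add_one_mul]
  exact mul_le_mul_of_nonneg_right (by rw [Real.norm_eq_abs, abs_le]; constructor <;> linarith)
    (rho_nonneg m s)

lemma integral_abs_sub_one_mul_rho_le {m : ℕ} (hm : 0 < m) :
    ∫ s in Ioi (0 : ℝ), |s - 1| * rho m s ≤ √(2 / m) := by
  set t := √(2 / (m : ℝ))
  have ht : 0 < t := Real.sqrt_pos.2 (by positivity)
  have ht2 : t ^ 2 = 2 / m := Real.sq_sqrt (by positivity)
  have hbound : ∀ s ∈ Ioi (0 : ℝ), t * (|s - 1| * rho m s) ≤
      (t ^ 2 / 2) * rho m s + (1 / 2) * ((s ^ 2 - 1) ^ 2 * rho m s) := by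
    intro s (hs : 0 < s)
    have hsq : (s - 1) ^ 2 ≤ (s ^ 2 - 1) ^ 2 := by
      nlinarith [mul_nonneg (sq_nonneg (s - 1)) (by positivity : 0 ≤ s * (s + 2))]
    have hamgm : t * |s - 1| ≤ t ^ 2 / 2 + (s - 1) ^ 2 / 2 := by
      nlinarith [sq_nonneg (t - |s - 1|), sq_abs (s - 1)]
    nlinarith [rho_nonneg m s]
  have hint : IntegrableOn (fun s => (t ^ 2 / 2) * rho m s + (1 / 2) * ((s ^ 2 - 1) ^ 2 * rho m s))
      (Ioi (0 : ℝ)) :=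
    ((integrableOn_rho m).const_mul _).add ((integrableOn_sq_sub_one_sq_mul_rho hm).const_mul _)
  refine le_of_mul_le_mul_left ?_ ht
  calc t * ∫ s in Ioi (0 : ℝ), |s - 1| * rho m s
      = ∫ s in Ioi (0 : ℝ), t * (|s - 1| * rho m s) := (integral_const_mul _ _).symm
    _ ≤ ∫ s in Ioi (0 : ℝ), ((t ^ 2 / 2) * rho m s + (1 / 2) * ((s ^ 2 - 1) ^ 2 * rho m s)) :=
        setIntegral_mono_on ((integrableOn_abs_sub_one_mul_rho hm).const_mul t) hint
          measurableSet_Ioi hbound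
    _ = t * t := by
        rw [integral_add ((integrableOn_rho m).const_mul _)
            ((integrableOn_sq_sub_one_sq_mul_rho hm).const_mul _), integral_const_mul,
          integral_const_mul, integral_rho hm, integral_sq_sub_one_sq_mul_rho hm, ← ht2]
        ring

lemma abs_integral_mul_rho_sub_le {m : ℕ} (hm : 0 < m) {f : ℝ → ℝ} {L : ℝ} (hf : Continuous f)
    (hL : ∀ s, |f s - f 1| ≤ L * |s - 1|) :
    |(∫ s in Ioi (0 : ℝ), f s * rho m s) - f 1| ≤ L * √(2 / m) := by
  have hL₀ : 0 ≤ L := by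
    simpa [show |(2 : ℝ) - 1| = 1 by norm_num] using (abs_nonneg _).trans (hL 2)
  have hpt (s : ℝ) : ‖(f s - f 1) * rho m s‖ ≤ L * (|s - 1| * rho m s) := by
    rw [norm_mul, Real.norm_eq_abs, Real.norm_of_nonneg (rho_nonneg m s), ← mul_assoc]
    exact mul_le_mul_of_nonneg_right (hL s) (rho_nonneg m s)
  have hdom := (integrableOn_abs_sub_one_mul_rho hm).const_mul L
  have hdiff : IntegrableOn (fun s => (f s - f 1) * rho m s) (Ioi (0 : ℝ)) :=
    hdom.mono' ((hf.sub continuous_const).aestronglyMeasurable.mul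
      (integrableOn_rho m).aestronglyMeasurable) (ae_of_all _ hpt)
  have hconst := (integrableOn_rho m).const_mul (f 1)
  have hfρ : IntegrableOn (fun s => f s * rho m s) (Ioi (0 : ℝ)) :=
    (hdiff.add hconst).congr_fun (fun s _ => by simp only [Pi.add_apply]; ring) measurableSet_Ioi
  calc |(∫ s in Ioi (0 : ℝ), f s * rho m s) - f 1|
      = ‖∫ s in Ioi (0 : ℝ), (f s - f 1) * rho m s‖ := by
        simp_rw [sub_mul]
        rw [integral_sub hfρ hconst, integral_const_mul, integral_rho hm, mul_one,
          Real.norm_eq_abs]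
    _ ≤ ∫ s in Ioi (0 : ℝ), L * (|s - 1| * rho m s) :=
        norm_integral_le_of_norm_le hdom (ae_of_all _ hpt)
    _ ≤ L * √(2 / m) := by
        rw [integral_const_mul]
        exact mul_le_mul_of_nonneg_left (integral_abs_sub_one_mul_rho_le hm) hL₀

lemma tendsto_integral_mul_rho {g : ℕ → ℝ → ℝ} {G : ℝ → ℝ} (m : ℕ) (hg : ∀ n, Continuous (g n))
    (hbdd : ∀ n s, |g n s| ≤ 1) (hlim : ∀ s, Tendsto (fun n => g n s) atTop (𝓝 (G s))) :
    Tendsto (fun n => ∫ s in Ioi (0 : ℝ), g n s * rho m s) atTop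
      (𝓝 (∫ s in Ioi (0 : ℝ), G s * rho m s)) :=
  tendsto_integral_of_dominated_convergence (rho m)
    (fun n => (hg n).aestronglyMeasurable.mul (integrableOn_rho m).aestronglyMeasurable)
    (integrableOn_rho m)
    (fun n => ae_of_all _ fun s => by
      rw [norm_mul, Real.norm_eq_abs, Real.norm_of_nonneg (rho_nonneg m s)]
      exact mul_le_of_le_one_left (rho_nonneg m s) (hbdd n s))
    (ae_of_all _ fun s => (hlim s).mul_const _)

lemma tendsto_integral_mul_rho_of_tendsto_atTop {ι : Type*} {l : Filter ι} {f : ι → ℝ → ℝ}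
    {m : ι → ℕ} {L : ι → ℝ} {L₀ y : ℝ} (hf : ∀ i, Continuous (f i))
    (hL : ∀ i s, |f i s - f i 1| ≤ L i * |s - 1|) (hL₀ : Tendsto L l (𝓝 L₀))
    (hm : Tendsto m l atTop) (hy : Tendsto (fun i => f i 1) l (𝓝 y)) :
    Tendsto (fun i => ∫ s in Ioi (0 : ℝ), f i s * rho (m i) s) l (𝓝 y) := by
  have hsqrt : Tendsto (fun i => √(2 / (m i : ℝ))) l (𝓝 0) := by
    simpa using ((tendsto_natCast_atTop_atTop.comp hm).const_div_atTop 2).sqrt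
  have hgap : Tendsto (fun i => (∫ s in Ioi (0 : ℝ), f i s * rho (m i) s) - f i 1) l (𝓝 0) := by
    refine squeeze_zero_norm' ?_ (by simpa only [mul_zero] using hL₀.mul hsqrt)
    filter_upwards [hm.eventually_gt_atTop 0] with i hi
    exact abs_integral_mul_rho_sub_le hi (hf i) (hL i)
  simpa using hgap.add hy

theorem stmt_4_general (ξ η : ℕ → ℝ) (e : ℝ)
    (hne : Tendsto (fun n : ℕ => Real.sqrt n * η n) atTop (nhds e))
    (k : ℕ → ℕ) (θ σ : ℕ → ℝ) (ν : EReal)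
    (hν : Tendsto (fun n : ℕ => ((Real.sqrt n * θ n / (σ n * ξ n) : ℝ) : EReal))
      atTop (nhds ν)) :
    (∀ m : ℕ, (∀ᶠ n in atTop, n - k n = m) →
        Tendsto (fun n : ℕ => ptdel n (n - k n) (ξ n) (η n) (θ n) (σ n)) atTop
          (nhds (∫ s in Ioi (0 : ℝ),
            (PhiE (-ν + ((s * e : ℝ) : EReal)) - PhiE (-ν - ((s * e : ℝ) : EReal)))
              * rho m s))) ∧
    (Tendsto (fun n : ℕ => n - k n) atTop atTop →
        Tendsto (fun n : ℕ => ptdel n (n - k n) (ξ n) (η n) (θ n) (σ n)) atTop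
          (nhds (PhiE (-ν + (e : EReal)) - PhiE (-ν - (e : EReal))))) := by
  set c : ℕ → ℝ := fun n => √n * θ n / (σ n * ξ n)
  set b : ℕ → ℝ := fun n => √n * η n
  have hptdel : ∀ n m, ptdel n m (ξ n) (η n) (θ n) (σ n) =
      ∫ s in Ioi (0 : ℝ), normalMass (-c n) (s * b n) * rho m s := fun n m => by
    simp only [ptdel, normalMass, c, b]
    congr 1 with s
    ring_nf
  have hmass (s : ℝ) : Tendsto (fun n => normalMass (-c n) (s * b n)) atTop
      (𝓝 (PhiE (-ν + ((s * e : ℝ) : EReal)) - PhiE (-ν - ((s * e : ℝ) : EReal)))) :=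
    tendsto_normalMass hν (hne.const_mul s)
  have hcont (n : ℕ) : Continuous fun s => normalMass (-c n) (s * b n) :=
    (continuous_normalMass _).comp (continuous_mul_const _)
  simp_rw [hptdel]
  refine ⟨fun m hm => ?_, fun hm => ?_⟩
  · exact (tendsto_integral_mul_rho m hcont (fun n s => abs_normalMass_le_one _ _) hmass).congr'
      (hm.mono fun n hn => by simp only [hn])
  · refine tendsto_integral_mul_rho_of_tendsto_atTop hcont (fun n s => ?_)
      (hne.abs.const_mul 2) hm (by simpa using hmass 1)
    calc |normalMass (-c n) (s * b n) - normalMass (-c n) (1 * b n)|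
        ≤ 2 * |s * b n - 1 * b n| := abs_normalMass_sub_normalMass_le _ _ _
      _ = 2 * |b n| * |s - 1| := by rw [← sub_mul, abs_mul]; ring

/-- conservative tuning, unknown-variance moving-parameter limits of the
deletion probability. -/
theorem stmt_4 (ξ η : ℕ → ℝ) (hξ : ∀ n, 0 < ξ n) (hη : ∀ n, 0 < η n)
    (hxe : Tendsto (fun n : ℕ => ξ n * η n) atTop (nhds 0))
    (e : ℝ) (he : 0 ≤ e)
    (hne : Tendsto (fun n : ℕ => Real.sqrt n * η n) atTop (nhds e))
    (k : ℕ → ℕ) (hk : ∀ n, 2 ≤ n → 1 ≤ k n ∧ k n < n)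
    (θ σ : ℕ → ℝ) (hσ : ∀ n, 0 < σ n)
    (ν : EReal)
    (hν : Tendsto (fun n : ℕ => ((Real.sqrt n * θ n / (σ n * ξ n) : ℝ) : EReal))
      atTop (nhds ν)) :
    (∀ m : ℕ, (∀ᶠ n in atTop, n - k n = m) →
        Tendsto (fun n : ℕ => ptdel n (n - k n) (ξ n) (η n) (θ n) (σ n)) atTop
          (nhds (∫ s in Ioi (0 : ℝ),
            (PhiE (-ν + ((s * e : ℝ) : EReal)) - PhiE (-ν - ((s * e : ℝ) : EReal)))
              * rho m s))) ∧
    (Tendsto (fun n : ℕ => n - k n) atTop atTop →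
        Tendsto (fun n : ℕ => ptdel n (n - k n) (ξ n) (η n) (θ n) (σ n)) atTop
          (nhds (PhiE (-ν + (e : EReal)) - PhiE (-ν - (e : EReal))))) :=
  stmt_4_general ξ η e hne k θ σ ν hν
end

section
/- Fix n ≥ 1, θ ∈ ℝ, σ > 0, ξ > 0, η > 0 and a scaling factor α > 0. Let Z be a real random variable with Gaussian law N(θ, σ²ξ²/n) and let θ̂_H = Z·1(|Z| > σξη) be the hard-thresholding estimator. Then for every x ∈ ℝ, P(σ^{−1}α(θ̂_H − θ) ≤ x) = Φ(n^{1/2} x/(α ξ))·1(|x/α + θ/σ| > ξη) + Φ(n^{1/2}(−θ/(σξ) + η))·1(0 ≤ x/α + θ/σ ≤ ξη) + Φ(n^{1/2}(−θ/(σξ) − η))·1(−ξη ≤ x/α + θ/σ < 0). -/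
/-!
The event `{σ⁻¹ α (θ̂_H - θ) ≤ x}` is `{H_τ(Z) ≤ c}` for the hard-thresholding map
`H_τ z = z · 1(|z| > τ)`, with `τ = σξη` and `c = σ (x/α + θ/σ)`. As a set of values of `Z`
it is a half-line whose endpoint depends only on where `c` lies: `(-∞, c]` if `|c| > τ`,
`(-∞, τ]` if `0 ≤ c ≤ τ` (the whole dead zone `[-τ, τ]` is mapped to `0 ≤ c`), and
`(-∞, -τ)` if `-τ ≤ c < 0`. Each term of the formula is the Gaussian mass of that half-line.
-/

open MeasureTheory ProbabilityTheory Filter Set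

open scoped NNReal

lemma gaussianReal_zero_one_Iic_toReal (t : ℝ) : (gaussianReal 0 1 (Iic t)).toReal = Phi t := by
  rw [gaussianReal_apply_eq_integral 0 one_ne_zero (Iic t), ENNReal.toReal_ofReal
    (setIntegral_nonneg measurableSet_Iic fun y _ => gaussianPDFReal_nonneg 0 1 y)]
  simp [Phi, gaussianPDFReal]

lemma gaussianReal_eq_map_standard (μ : ℝ) (v : ℝ≥0) :
    gaussianReal μ v = (gaussianReal 0 1).map (fun x => Real.sqrt v * x + μ) := by
  have hscale : (gaussianReal 0 1).map (Real.sqrt v * ·) = gaussianReal 0 v := by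
    rw [gaussianReal_map_const_mul]
    congr 1
    · simp
    · ext
      simp [Real.sq_sqrt v.coe_nonneg]
  have hcomp : (fun x => Real.sqrt v * x + μ) = (· + μ) ∘ (Real.sqrt v * ·) := rfl
  rw [hcomp, ← Measure.map_map (by fun_prop) (by fun_prop), hscale, gaussianReal_map_add_const,
    zero_add]

lemma gaussianReal_Iic_toReal (μ : ℝ) {v : ℝ≥0} (hv : v ≠ 0) (a : ℝ) :
    (gaussianReal μ v (Iic a)).toReal = Phi ((a - μ) / Real.sqrt v) := by
  have hsd : 0 < Real.sqrt v := Real.sqrt_pos.mpr (NNReal.coe_pos.mpr (pos_iff_ne_zero.mpr hv))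
  have hpre : (fun x => Real.sqrt v * x + μ) ⁻¹' Iic a = Iic ((a - μ) / Real.sqrt v) := by
    ext y
    simp only [mem_preimage, mem_Iic, le_div_iff₀ hsd]
    constructor <;> intro h <;> linarith
  rw [gaussianReal_eq_map_standard, Measure.map_apply (by fun_prop) measurableSet_Iic, hpre,
    gaussianReal_zero_one_Iic_toReal]

lemma gaussianReal_Iio_toReal (μ : ℝ) {v : ℝ≥0} (hv : v ≠ 0) (a : ℝ) :
    (gaussianReal μ v (Iio a)).toReal = Phi ((a - μ) / Real.sqrt v) := by
  have hatom : gaussianReal μ v {a} = 0 :=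
    gaussianReal_absolutelyContinuous μ hv (measure_singleton a)
  rw [measure_congr (Iio_ae_eq_Iic' hatom), gaussianReal_Iic_toReal μ hv a]

noncomputable def hardThreshold (τ z : ℝ) : ℝ := if τ < |z| then z else 0

section hardThreshold

variable {τ c : ℝ}

lemma setOf_hardThreshold_le_of_lt_abs (hc : τ < |c|) :
    {z | hardThreshold τ z ≤ c} = Iic c := by
  ext z
  simp only [hardThreshold, mem_ofPred_eq, mem_Iic]
  split_ifs with hz
  · rfl
  · rcases lt_abs.mp hc with hc | hc
    · constructor <;> intro <;> linarith [le_abs_self z, abs_nonneg z]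
    · constructor <;> intro <;> linarith [neg_abs_le z, abs_nonneg z]

lemma setOf_hardThreshold_le_of_nonneg_of_le (hc₀ : 0 ≤ c) (hcτ : c ≤ τ) :
    {z | hardThreshold τ z ≤ c} = Iic τ := by
  ext z
  simp only [hardThreshold, mem_ofPred_eq, mem_Iic]
  split_ifs with hz
  · rcases lt_abs.mp hz with hz | hz
    · constructor <;> intro <;> linarith
    · constructor <;> intro <;> linarith
  · constructor <;> intro <;> linarith [le_abs_self z]

lemma setOf_hardThreshold_le_of_neg_le_of_neg (hcτ : -τ ≤ c) (hc₀ : c < 0) :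
    {z | hardThreshold τ z ≤ c} = Iio (-τ) := by
  ext z
  simp only [hardThreshold, mem_ofPred_eq, mem_Iio]
  split_ifs with hz
  · rcases lt_abs.mp hz with hz | hz
    · constructor <;> intro <;> linarith
    · constructor <;> intro <;> linarith
  · constructor <;> intro <;> linarith [neg_abs_le z]

end hardThreshold

theorem gaussianReal_hardThreshold_le_toReal (μ : ℝ) {v : ℝ≥0} (hv : v ≠ 0) (τ c : ℝ) :
    (gaussianReal μ v {z | hardThreshold τ z ≤ c}).toReal =
      Phi ((c - μ) / Real.sqrt v) * (if τ < |c| then 1 else 0)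
        + Phi ((τ - μ) / Real.sqrt v) * (if 0 ≤ c ∧ c ≤ τ then 1 else 0)
        + Phi ((-τ - μ) / Real.sqrt v) * (if -τ ≤ c ∧ c < 0 then 1 else 0) := by
  by_cases hc : τ < |c|
  · have hmid : ¬ (0 ≤ c ∧ c ≤ τ) := fun h => hc.not_ge (by rw [abs_of_nonneg h.1]; exact h.2)
    have hneg : ¬ (-τ ≤ c ∧ c < 0) := fun h => hc.not_ge (by rw [abs_of_neg h.2]; linarith)
    simp [setOf_hardThreshold_le_of_lt_abs hc, gaussianReal_Iic_toReal μ hv, hc, hmid, hneg]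
  · obtain ⟨hcτ₁, hcτ₂⟩ := abs_le.mp (not_lt.mp hc)
    rcases le_or_gt 0 c with hc₀ | hc₀
    · simp [setOf_hardThreshold_le_of_nonneg_of_le hc₀ hcτ₂, gaussianReal_Iic_toReal μ hv, hc,
        hc₀, hcτ₂]
    · simp [setOf_hardThreshold_le_of_neg_le_of_neg hcτ₁ hc₀, gaussianReal_Iio_toReal μ hv, hc,
        hc₀, hcτ₁, not_le.mpr hc₀]

theorem stmt_10_general (n : ℕ) (hn : 1 ≤ n) (θ σ ξ η α : ℝ)
    (hσ : 0 < σ) (hξ : 0 < ξ) (hα : 0 < α) (x : ℝ) :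
    (gaussianReal θ (Real.toNNReal (σ ^ 2 * ξ ^ 2 / n))
        {z : ℝ | σ⁻¹ * α * ((if σ * ξ * η < |z| then z else 0) - θ) ≤ x}).toReal =
      Phi (Real.sqrt n * x / (α * ξ)) *
          (if ξ * η < |x / α + θ / σ| then 1 else 0)
        + Phi (Real.sqrt n * (-θ / (σ * ξ) + η)) *
          (if 0 ≤ x / α + θ / σ ∧ x / α + θ / σ ≤ ξ * η then 1 else 0)
        + Phi (Real.sqrt n * (-θ / (σ * ξ) - η)) *
          (if -(ξ * η) ≤ x / α + θ / σ ∧ x / α + θ / σ < 0 then 1 else 0) := by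
  have hn' : (0 : ℝ) < n := by exact_mod_cast hn
  have hevent : {z : ℝ | σ⁻¹ * α * ((if σ * ξ * η < |z| then z else 0) - θ) ≤ x}
      = {z | hardThreshold (σ * ξ * η) z ≤ σ * (x / α + θ / σ)} := by
    ext z
    simp only [mem_ofPred_eq, hardThreshold, ← le_div_iff₀' (by positivity : 0 < σ⁻¹ * α),
      sub_le_iff_le_add]
    rw [show x / (σ⁻¹ * α) + θ = σ * (x / α + θ / σ) by field_simp]
  have hv : Real.toNNReal (σ ^ 2 * ξ ^ 2 / n) ≠ 0 := by
    rw [Ne, Real.toNNReal_eq_zero, not_le]; positivity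
  have hsd : Real.sqrt (Real.toNNReal (σ ^ 2 * ξ ^ 2 / n)) = σ * ξ / Real.sqrt n := by
    rw [Real.coe_toNNReal _ (by positivity), Real.sqrt_div' _ hn'.le,
      Real.sqrt_mul' _ (sq_nonneg _), Real.sqrt_sq hσ.le, Real.sqrt_sq hξ.le]
  have hneg (u : ℝ) : σ * u < 0 ↔ u < 0 :=
    ⟨(neg_of_mul_neg_right · hσ.le), mul_neg_of_pos_of_neg hσ⟩
  rw [hevent, gaussianReal_hardThreshold_le_toReal θ hv, hsd]
  simp only [mul_assoc σ, abs_mul, abs_of_pos hσ, mul_lt_mul_iff_right₀ hσ,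
    mul_nonneg_iff_of_pos_left hσ, mul_le_mul_iff_right₀ hσ, ← mul_neg, hneg]
  congr 4 <;> field_simp <;> ring

/-- finite-sample cdf of the scaled and centered infeasible
hard-thresholding estimator. -/
theorem stmt_10 (n : ℕ) (hn : 1 ≤ n) (θ σ ξ η α : ℝ)
    (hσ : 0 < σ) (hξ : 0 < ξ) (hη : 0 < η) (hα : 0 < α) (x : ℝ) :
    (gaussianReal θ (Real.toNNReal (σ ^ 2 * ξ ^ 2 / n))
        {z : ℝ | σ⁻¹ * α * ((if σ * ξ * η < |z| then z else 0) - θ) ≤ x}).toReal =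
      Phi (Real.sqrt n * x / (α * ξ)) *
          (if ξ * η < |x / α + θ / σ| then 1 else 0)
        + Phi (Real.sqrt n * (-θ / (σ * ξ) + η)) *
          (if 0 ≤ x / α + θ / σ ∧ x / α + θ / σ ≤ ξ * η then 1 else 0)
        + Phi (Real.sqrt n * (-θ / (σ * ξ) - η)) *
          (if -(ξ * η) ≤ x / α + θ / σ ∧ x / α + θ / σ < 0 then 1 else 0) :=
  stmt_10_general n hn θ σ ξ η α hσ hξ hα x
end
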